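/- arXiv:1810.01638 — 2 statements merged into one kernel-verified Lean document; each statement's English description precedes it below -/
import Mathlib

section
/- Let β : ℕ → ℝ be any sequence of momentum coefficients and let z, y : ℕ → ℝⁿ follow Nesterov's accelerated gradient iteration y_k = z_k + β_k (z_k − z_{k−1}), z_{k+1} = y_k − ∇f(y_k) for k ≥ 1. Define x_k = U⁻¹ z_k for all k. Then for every k ≥ 1, x_{k+1} = Φ(W (x_k + β_k (x_k − x_{k−1}))), where Φ is applied entrywise. -/
open scoped RealInnerProductSpace

/-- Matrix-vector multiplication on Euclidean space. -/
noncomputable def mvE {n : ℕ} (U : Matrix (Fin n) (Fin n) ℝ)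
    (v : EuclideanSpace ℝ (Fin n)) : EuclideanSpace ℝ (Fin n) :=
  WithLp.toLp 2 (U.mulVec v)

/-- Entrywise application of a scalar function to a vector. -/
noncomputable def appE {n : ℕ} (Φ : ℝ → ℝ)
    (v : EuclideanSpace ℝ (Fin n)) : EuclideanSpace ℝ (Fin n) :=
  WithLp.toLp 2 (fun i => Φ (v i))

/-!
Since `∇f(z) = z − U Φ(Uᵀ z)` and `U` is symmetric, a gradient step from `y` lands on
`z⁺ = y − ∇f(y) = U Φ(U y)`. Changing variables by `x = U⁻¹ z`, the momentum point
`x_k + β_k (x_k − x_{k−1})` is `U⁻¹ y_k` by linearity, and `W U⁻¹ = U`, so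
`x_{k+1} = U⁻¹ U Φ(U y_k) = Φ(W (x_k + β_k (x_k − x_{k−1})))`.
-/

section Gradient

variable {E : Type*} [NormedAddCommGroup E] [InnerProductSpace ℝ E] [CompleteSpace E]

theorem hasGradientAt_half_norm_sq_sub_sum_comp_inner {ι : Type*} [Fintype ι]
    {Φ Ψ : ℝ → ℝ} (hΨ : ∀ t, HasDerivAt Ψ (Φ t) t) (u : ι → E) (z : E) :
    HasGradientAt (fun w => ‖w‖ ^ 2 / 2 - ∑ i, Ψ ⟪u i, w⟫)
      (z - ∑ i, Φ ⟪u i, z⟫ • u i) z := by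
  rw [hasGradientAt_iff_hasFDerivAt]
  have hnorm : HasFDerivAt (fun w : E => ‖w‖ ^ 2 / 2) (innerSL ℝ z) z := by
    have h := (hasStrictFDerivAt_norm_sq z).hasFDerivAt.mul_const (1 / 2 : ℝ)
    simp only [← div_eq_mul_one_div] at h
    refine h.congr_fderiv ?_
    ext w
    simp
  have hsum : HasFDerivAt (fun w => ∑ i, Ψ ⟪u i, w⟫) (∑ i, Φ ⟪u i, z⟫ • innerSL ℝ (u i)) z :=
    HasFDerivAt.fun_sum fun i _ => (hΨ _).comp_hasFDerivAt z (innerSL ℝ (u i)).hasFDerivAt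
  refine (hnorm.sub hsum).congr_fderiv ?_
  ext w
  simp

end Gradient

section Matrix

open scoped Matrix

variable {n : ℕ}

theorem mvE_eq_toLpLin (A : Matrix (Fin n) (Fin n) ℝ) : mvE A = Matrix.toLpLin 2 2 A := rfl

theorem mvE_mvE (A B : Matrix (Fin n) (Fin n) ℝ) (v : EuclideanSpace ℝ (Fin n)) :
    mvE A (mvE B v) = mvE (A * B) v := by
  simp [mvE_eq_toLpLin]

theorem mvE_one (v : EuclideanSpace ℝ (Fin n)) : mvE 1 v = v := by
  simp [mvE_eq_toLpLin]

theorem gradient_eq_sub_mvE_appE {U : Matrix (Fin n) (Fin n) ℝ} {Φ Ψ : ℝ → ℝ}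
    (hΨ : ∀ t, HasDerivAt Ψ (Φ t) t) {f : EuclideanSpace ℝ (Fin n) → ℝ}
    (hf : ∀ z : EuclideanSpace ℝ (Fin n), f z = ‖z‖ ^ 2 / 2 - ∑ i, Ψ (∑ j, U j i * z j))
    (z : EuclideanSpace ℝ (Fin n)) :
    gradient f z = z - mvE U (appE Φ (mvE Uᵀ z)) := by
  let col : Fin n → EuclideanSpace ℝ (Fin n) := fun i => WithLp.toLp 2 (Uᵀ i)
  have inner_col : ∀ i w, ⟪col i, w⟫ = ∑ j, U j i * w j := fun i w => by
    simp [col, PiLp.inner_apply, mul_comm]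
  have sum_smul_col : ∀ c : EuclideanSpace ℝ (Fin n), ∑ i, c i • col i = mvE U c := fun c => by
    ext j
    simp [col, mvE, Matrix.mulVec, dotProduct, mul_comm]
  have hf' : f = fun w => ‖w‖ ^ 2 / 2 - ∑ i, Ψ ⟪col i, w⟫ := by
    funext w
    simp only [inner_col, hf]
  rw [hf', (hasGradientAt_half_norm_sq_sub_sum_comp_inner hΨ col z).gradient, ← sum_smul_col]
  simp [inner_col, appE, mvE, Matrix.mulVec, dotProduct]

end Matrix

theorem agd_sequence_general (n : ℕ)
    (U : Matrix (Fin n) (Fin n) ℝ) (hU : U.IsSymm) (hUinv : IsUnit U.det)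
    (W : Matrix (Fin n) (Fin n) ℝ) (hW : W = U ^ 2)
    (Φ Ψ : ℝ → ℝ) (hΨ : ∀ x : ℝ, HasDerivAt Ψ (Φ x) x)
    (f : EuclideanSpace ℝ (Fin n) → ℝ)
    (hf : ∀ z : EuclideanSpace ℝ (Fin n),
      f z = ‖z‖ ^ 2 / 2 - ∑ i, Ψ (∑ j, U j i * z j))
    (β : ℕ → ℝ) (z y x : ℕ → EuclideanSpace ℝ (Fin n))
    (hy : ∀ k : ℕ, 1 ≤ k → y k = z k + β k • (z k - z (k - 1)))
    (hz : ∀ k : ℕ, 1 ≤ k → z (k + 1) = y k - gradient f (y k))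
    (hx : ∀ k : ℕ, x k = mvE U⁻¹ (z k)) :
    ∀ k : ℕ, 1 ≤ k →
      x (k + 1) = appE Φ (mvE W (x k + β k • (x k - x (k - 1)))) := by
  intro k hk
  have gradient_step : ∀ v, v - gradient f v = mvE U (appE Φ (mvE U v)) := fun v => by
    rw [gradient_eq_sub_mvE_appE hΨ hf, hU.eq, sub_sub_cancel]
  calc x (k + 1) = mvE U⁻¹ (mvE U (appE Φ (mvE U (y k)))) := by rw [hx, hz k hk, gradient_step]
    _ = appE Φ (mvE U (y k)) := by rw [mvE_mvE, U.nonsing_inv_mul hUinv, mvE_one]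
    _ = appE Φ (mvE W (mvE U⁻¹ (y k))) := by
      rw [mvE_mvE, hW, sq, mul_assoc, U.mul_nonsing_inv hUinv, mul_one]
    _ = appE Φ (mvE W (x k + β k • (x k - x (k - 1)))) := by
      simp only [hy k hk, hx, mvE_eq_toLpLin, map_add, map_sub, map_smul]

/-- if `z, y` follow Nesterov's accelerated gradient iteration
`y_k = z_k + β_k(z_k − z_{k−1})`, `z_{k+1} = y_k − ∇f(y_k)` for `k ≥ 1`, with
`f(z) = ‖z‖²/2 − ∑ᵢ Ψ(Uᵢᵀ z)`, and `x_k = U⁻¹ z_k`, then for every `k ≥ 1`,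
`x_{k+1} = Φ(W(x_k + β_k(x_k − x_{k−1})))` with `W = U²`. -/
theorem agd_sequence (n : ℕ) (hn : 0 < n)
    (U : Matrix (Fin n) (Fin n) ℝ) (hU : U.IsSymm) (hUinv : IsUnit U.det)
    (W : Matrix (Fin n) (Fin n) ℝ) (hW : W = U ^ 2)
    (Φ Ψ : ℝ → ℝ) (hΨ : ∀ x : ℝ, HasDerivAt Ψ (Φ x) x)
    (f : EuclideanSpace ℝ (Fin n) → ℝ)
    (hf : ∀ z : EuclideanSpace ℝ (Fin n),
      f z = ‖z‖ ^ 2 / 2 - ∑ i, Ψ (∑ j, U j i * z j))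
    (β : ℕ → ℝ) (z y x : ℕ → EuclideanSpace ℝ (Fin n))
    (hy : ∀ k : ℕ, 1 ≤ k → y k = z k + β k • (z k - z (k - 1)))
    (hz : ∀ k : ℕ, 1 ≤ k → z (k + 1) = y k - gradient f (y k))
    (hx : ∀ k : ℕ, x k = mvE U⁻¹ (z k)) :
    ∀ k : ℕ, 1 ≤ k →
      x (k + 1) = appE Φ (mvE W (x k + β k • (x k - x (k - 1)))) :=
  agd_sequence_general n U hU hUinv W hW Φ Ψ hΨ f hf β z y x hy hz hx
end

section
/- Let U be a symmetric real n×n matrix with i-th column U_i and define f : ℝⁿ → ℝ by f(z) = ‖z‖²/2 − Σ_{i=1}^n [ U_iᵀz + log(exp(−U_iᵀz) + 1) ]. Then for every z ∈ ℝⁿ, the gradient of f at z equals z − U·σ(Uz), where σ(t) = 1/(1 + e^{−t}) is applied entrywise to the vector Uz. -/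
open scoped RealInnerProductSpace

/-! Since `Ψ(t) = t + log (e⁻ᵗ + 1)` has derivative `σ`, the chain rule gives the gradient
`∑ᵢ σ(⟪Uᵢ, z⟫) Uᵢ = U σ(Uᵀ z)` for `z ↦ ∑ᵢ Ψ(⟪Uᵢ, z⟫)`, while `‖z‖²/2` has gradient `z`;
symmetry of `U` turns `Uᵀ z` into `U z`. -/

lemma hasDerivAt_add_log_exp_neg_add_one (t : ℝ) :
    HasDerivAt (fun t => t + Real.log (Real.exp (-t) + 1)) (1 / (1 + Real.exp (-t))) t := by
  have hexp : HasDerivAt (fun t => Real.exp (-t) + 1) (-Real.exp (-t)) t := by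
    simpa using ((Real.hasDerivAt_exp (-t)).comp t (hasDerivAt_neg t)).add_const 1
  refine ((hasDerivAt_id' t).add (hexp.log (by positivity))).congr_deriv ?_
  field_simp
  ring

section Gradient

variable {E : Type*} [NormedAddCommGroup E] [InnerProductSpace ℝ E] [CompleteSpace E]
  {f g : E → ℝ} {f' g' x : E}

lemma HasGradientAt.sub (hf : HasGradientAt f f' x) (hg : HasGradientAt g g' x) :
    HasGradientAt (fun y => f y - g y) (f' - g') x := by
  rw [hasGradientAt_iff_hasFDerivAt] at *
  rw [map_sub]
  exact hf.sub hg

lemma HasGradientAt.sum {ι : Type*} (s : Finset ι) {f : ι → E → ℝ} {f' : ι → E}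
    (h : ∀ i ∈ s, HasGradientAt (f i) (f' i) x) :
    HasGradientAt (fun y => ∑ i ∈ s, f i y) (∑ i ∈ s, f' i) x := by
  simp only [hasGradientAt_iff_hasFDerivAt, map_sum] at *
  exact HasFDerivAt.fun_sum h

lemma hasGradientAt_norm_sq_div_two (x : E) : HasGradientAt (fun y => ‖y‖ ^ 2 / 2) x x := by
  rw [hasGradientAt_iff_hasFDerivAt]
  simp_rw [div_eq_mul_inv]
  refine ((hasStrictFDerivAt_norm_sq x).hasFDerivAt.mul_const 2⁻¹).congr_fderiv ?_
  ext y
  simp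

lemma HasDerivAt.hasGradientAt_comp_inner {ψ : ℝ → ℝ} {ψ' : ℝ} (u : E)
    (h : HasDerivAt ψ ψ' ⟪u, x⟫) : HasGradientAt (fun y => ψ ⟪u, y⟫) (ψ' • u) x := by
  rw [hasGradientAt_iff_hasFDerivAt]
  refine (h.comp_hasFDerivAt x (innerSL ℝ u).hasFDerivAt).congr_fderiv ?_
  ext y
  simp

end Gradient

open scoped Matrix

lemma inner_toLp_transpose_apply {n : ℕ} (U : Matrix (Fin n) (Fin n) ℝ) (i : Fin n)
    (z : EuclideanSpace ℝ (Fin n)) : ⟪WithLp.toLp 2 (Uᵀ i), z⟫ = ∑ j, U j i * z j := by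
  simp [PiLp.inner_apply, mul_comm]

lemma sum_smul_toLp_transpose_eq_mvE {n : ℕ} (U : Matrix (Fin n) (Fin n) ℝ)
    (c : EuclideanSpace ℝ (Fin n)) : ∑ i, c i • WithLp.toLp 2 (Uᵀ i) = mvE U c := by
  ext k
  simp [mvE, Matrix.mulVec, dotProduct, mul_comm]

lemma hasGradientAt_sum_comp_transpose_mulVec {n : ℕ} (U : Matrix (Fin n) (Fin n) ℝ)
    {ψ φ : ℝ → ℝ} (hψ : ∀ t, HasDerivAt ψ (φ t) t) (z : EuclideanSpace ℝ (Fin n)) :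
    HasGradientAt (fun z : EuclideanSpace ℝ (Fin n) => ∑ i, ψ (∑ j, U j i * z j))
      (mvE U (appE φ (mvE Uᵀ z))) z := by
  have h := HasGradientAt.sum Finset.univ fun i _ =>
    (hψ _).hasGradientAt_comp_inner (x := z) (WithLp.toLp 2 (Uᵀ i))
  simp only [inner_toLp_transpose_apply] at h
  convert h using 1
  rw [← sum_smul_toLp_transpose_eq_mvE]
  simp [appE, mvE, Matrix.mulVec, dotProduct]

theorem sigmoid_gradient_general (n : ℕ)
    (U : Matrix (Fin n) (Fin n) ℝ) (hU : U.IsSymm)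
    (f : EuclideanSpace ℝ (Fin n) → ℝ)
    (hf : ∀ z : EuclideanSpace ℝ (Fin n),
      f z = ‖z‖ ^ 2 / 2
        - ∑ i, ((∑ j, U j i * z j) + Real.log (Real.exp (-(∑ j, U j i * z j)) + 1)))
    (z : EuclideanSpace ℝ (Fin n)) :
    HasGradientAt f
      (z - mvE U (appE (fun t => 1 / (1 + Real.exp (-t))) (mvE U z))) z := by
  have h := (hasGradientAt_norm_sq_div_two z).sub
    (hasGradientAt_sum_comp_transpose_mulVec U hasDerivAt_add_log_exp_neg_add_one z)
  rw [hU.eq] at h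
  exact h.congr_of_eventuallyEq (.of_forall hf)

/-- for symmetric `U` and
`f(z) = ‖z‖²/2 − ∑ᵢ [Uᵢᵀz + log(exp(−Uᵢᵀz) + 1)]`, the gradient of `f` at any
`z` equals `z − U·σ(Uz)`, where `σ(t) = 1/(1 + e^{−t})` is applied entrywise. -/
theorem sigmoid_gradient (n : ℕ) (hn : 0 < n)
    (U : Matrix (Fin n) (Fin n) ℝ) (hU : U.IsSymm)
    (f : EuclideanSpace ℝ (Fin n) → ℝ)
    (hf : ∀ z : EuclideanSpace ℝ (Fin n),
      f z = ‖z‖ ^ 2 / 2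
        - ∑ i, ((∑ j, U j i * z j) + Real.log (Real.exp (-(∑ j, U j i * z j)) + 1)))
    (z : EuclideanSpace ℝ (Fin n)) :
    HasGradientAt f
      (z - mvE U (appE (fun t => 1 / (1 + Real.exp (-t))) (mvE U z))) z :=
  sigmoid_gradient_general n U hU f hf z
end
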